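/- arXiv:2207.13206 — 14 statements merged into one kernel-verified Lean document; each statement's English description precedes it below -/
import Mathlib

section
/- Let H be an Arf numerical semigroup, let x be a gap of H, and let h, h' be consecutive elements of H with h < x < h' (that is, h ∈ H, h' ∈ H, and no element of H lies strictly between h and h'). Then x is an Arf special gap of H if and only if x is a special gap of H, 2x − h ∈ H, and 2h' − x ∈ H. -/
/-- A numerical semigroup: a subset of ℕ containing 0, closed under addition,
with finite complement. -/
def IsNumericalSemigroup (H : Set ℕ) : Prop :=
  0 ∈ H ∧ (∀ a ∈ H, ∀ b ∈ H, a + b ∈ H) ∧ (Hᶜ : Set ℕ).Finite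

/-- An Arf numerical semigroup: for all a ≥ b ≥ c in H, a + b - c ∈ H. -/
def IsArfSemigroup (H : Set ℕ) : Prop :=
  IsNumericalSemigroup H ∧
    ∀ a ∈ H, ∀ b ∈ H, ∀ c ∈ H, c ≤ b → b ≤ a → a + b - c ∈ H

/-- The special gaps of H. -/
def SpecialGaps (H : Set ℕ) : Set ℕ :=
  {x | x ∉ H ∧ IsNumericalSemigroup (H ∪ {x})}

/-- The Arf special gaps of H. -/
def ArfSpecialGaps (H : Set ℕ) : Set ℕ :=
  {x | x ∉ H ∧ IsArfSemigroup (H ∪ {x})}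

/-- The Frobenius number of H (the largest gap; meaningful when H ≠ ℕ). -/
noncomputable def Frobenius (H : Set ℕ) : ℕ := sSup Hᶜ

/-- An irreducible numerical semigroup. -/
def IsIrreducibleNS (H : Set ℕ) : Prop :=
  IsNumericalSemigroup H ∧
    ¬ ∃ H₁ H₂ : Set ℕ, IsNumericalSemigroup H₁ ∧ IsNumericalSemigroup H₂ ∧
      H ⊂ H₁ ∧ H ⊂ H₂ ∧ H = H₁ ∩ H₂

/-- An Arf-irreducible numerical semigroup. -/
def ArfIrreducible (H : Set ℕ) : Prop :=
  IsArfSemigroup H ∧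
    ¬ ∃ H₁ H₂ : Set ℕ, IsArfSemigroup H₁ ∧ IsArfSemigroup H₂ ∧
      H ⊂ H₁ ∧ H ⊂ H₂ ∧ H = H₁ ∩ H₂

/-- The set of Arf numerical semigroups containing H. -/
def ArfOver (H : Set ℕ) : Set (Set ℕ) := {S | IsArfSemigroup S ∧ H ⊆ S}

/-- The set of Arf-irreducible numerical semigroups containing H. -/
def QA (H : Set ℕ) : Set (Set ℕ) := {S | ArfIrreducible S ∧ H ⊆ S}

/-- A variety of numerical semigroups. -/
def IsVariety (Ψ : Set (Set ℕ)) : Prop :=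
  Ψ.Nonempty ∧ (∀ S ∈ Ψ, IsNumericalSemigroup S) ∧
    (∀ S ∈ Ψ, ∀ S' : Set ℕ, IsNumericalSemigroup S' → S ⊆ S' → S' ∈ Ψ) ∧
    (∀ S ∈ Ψ, ∀ S' ∈ Ψ, S ∩ S' ∈ Ψ)

/-- The variety generated by a family of numerical semigroups. -/
def GeneratedVariety (F : Set (Set ℕ)) : Set (Set ℕ) :=
  ⋂₀ {Ψ | IsVariety Ψ ∧ F ⊆ Ψ}

/-- For an Arf numerical semigroup H, a gap x, and consecutive elements h < x < h' of H:
x is an Arf special gap iff x is a special gap, 2x - h ∈ H and 2h' - x ∈ H. -/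
theorem arf_special_gap_iff (H : Set ℕ) (hH : IsArfSemigroup H)
    (x h h' : ℕ) (hx : x ∉ H) (hh : h ∈ H) (hh' : h' ∈ H)
    (hlt : h < x) (hlt' : x < h')
    (hcons : ∀ y ∈ H, ¬ (h < y ∧ y < h')) :
    x ∈ ArfSpecialGaps H ↔
      x ∈ SpecialGaps H ∧ 2 * x - h ∈ H ∧ 2 * h' - x ∈ H := by
  have harf := hH.2
  have arf' : ∀ p ∈ H, ∀ q ∈ H, ∀ r ∈ H, r ≤ p → r ≤ q → p + q - r ∈ H := by
    intro p hp q hq r hr h1 h2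
    rcases le_total p q with hle | hle
    · have := harf q hq p hp r hr h1 hle
      rwa [Nat.add_comm] at this
    · exact harf p hp q hq r hr h2 hle
  constructor
  · rintro ⟨hxn, hSns, hSarf⟩
    refine ⟨⟨hxn, hSns⟩, ?_, ?_⟩
    · have hm : x ∈ H ∪ {x} := Or.inr rfl
      have h1 := hSarf x hm x hm h (Or.inl hh) (le_of_lt hlt) le_rfl
      rcases h1 with h1 | h1
      · have e : 2 * x - h = x + x - h := by omega
        rwa [e]
      · exfalso
        have : x + x - h = x := h1
        omega
    · have hm : x ∈ H ∪ {x} := Or.inr rfl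
      have h1 := hSarf h' (Or.inl hh') h' (Or.inl hh') x hm (le_of_lt hlt') le_rfl
      rcases h1 with h1 | h1
      · have e : 2 * h' - x = h' + h' - x := by omega
        rwa [e]
      · exfalso
        have : h' + h' - x = x := h1
        omega
  · rintro ⟨⟨hxn, hSns⟩, h2xh, h2h'x⟩
    -- basic positional facts
    have hgea : ∀ a ∈ H, x ≤ a → h' ≤ a := by
      intro a ha hxa
      by_contra hcon
      push_neg at hcon
      exact hcons a ha ⟨by omega, by omega⟩
    have hgapc : ∀ c ∈ H, c ≤ x → c ≤ h := by
      intro c hc hcx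
      by_contra hcon
      push_neg at hcon
      have hcx' : c ≠ x := fun e => hxn (e ▸ hc)
      exact hcons c hc ⟨by omega, by omega⟩
    have h'le : h' ≤ 2 * x - h := by
      by_contra hcon
      push_neg at hcon
      exact hcons _ h2xh ⟨by omega, by omega⟩
    -- key lemma 1 : x + h' - c ∈ H for c ≤ h in H
    have key1 : ∀ c ∈ H, c ≤ h → x + h' - c ∈ H := by
      intro c hc hch
      have h1 : 2 * x - c ∈ H := by
        have := harf (2 * x - h) h2xh h hh c hc hch (by omega)
        have e : 2 * x - c = 2 * x - h + h - c := by omega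
        rwa [e]
      have h2 := arf' (2 * x - c) h1 (2 * h' - x) h2h'x h' hh' (by omega) (by omega)
      have e : x + h' - c = 2 * x - c + (2 * h' - x) - h' := by omega
      rwa [e]
    -- key lemma F : x + a - c ∈ H for a ≥ h', c ≤ h in H
    have keyF : ∀ a ∈ H, h' ≤ a → ∀ c ∈ H, c ≤ h → x + a - c ∈ H := by
      intro a ha hha c hc hch
      have k1 := key1 c hc hch
      have h2 := arf' (x + h' - c) k1 a ha h' hh' (by omega) hha
      have e : x + a - c = x + h' - c + a - h' := by omega
      rwa [e]
    refine ⟨hxn, hSns, ?_⟩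
    intro a ha b hb c hc hcb hba
    rcases hc with hc | hc
    · -- c ∈ H
      rcases hb with hb | hb
      · -- b ∈ H
        rcases ha with ha | ha
        · exact Or.inl (harf a ha b hb c hc hcb hba)
        · -- a = x
          have hax : a = x := ha
          have hbh : b ≤ h := hgapc b hb (by omega)
          rcases eq_or_lt_of_le hcb with hbc | hbc
          · right
            simp only [Set.mem_singleton_iff]
            omega
          · have hw : h + b - c ∈ H := harf h hh b hb c hc (le_of_lt hbc) hbh
            have hwh' : h' ≤ h + b - c := by
              by_contra hcon
              push_neg at hcon
              exact hcons _ hw ⟨by omega, by omega⟩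
            have hm := keyF (h + b - c) hw hwh' h hh le_rfl
            have e : a + b - c = x + (h + b - c) - h := by omega
            rw [e]
            exact Or.inl hm
      · -- b = x
        have hbx : b = x := hb
        have hch : c ≤ h := hgapc c hc (by omega)
        rcases ha with ha | ha
        · have hah' : h' ≤ a := hgea a ha (by omega)
          have hm := keyF a ha hah' c hc hch
          have e : a + b - c = x + a - c := by omega
          rw [e]
          exact Or.inl hm
        · -- a = x : 2x - c
          have hax : a = x := ha
          have h1 : 2 * x - c ∈ H := by
            have := harf (2 * x - h) h2xh h hh c hc hch (by omega)
            have e : 2 * x - c = 2 * x - h + h - c := by omega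
            rwa [e]
          have e : a + b - c = 2 * x - c := by omega
          rw [e]
          exact Or.inl h1
    · -- c = x
      have hcx : c = x := hc
      rcases hb with hb | hb
      · rcases ha with ha | ha
        · have hbh' : h' ≤ b := hgea b hb (by omega)
          have hah' : h' ≤ a := le_trans hbh' hba
          have hw : a + b - h' ∈ H := harf a ha b hb h' hh' hbh' hba
          have h2 := arf' (a + b - h') hw (2 * h' - x) h2h'x h' hh' (by omega) (by omega)
          have e : a + b - c = a + b - h' + (2 * h' - x) - h' := by omega
          rw [e]
          exact Or.inl h2
        · -- a = x, so b = x, contradiction with b ∈ H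
          have hax : a = x := ha
          have hbx : b = x := by omega
          exact absurd (hbx ▸ hb) hxn
      · -- b = x
        have hbx : b = x := hb
        rcases ha with ha | ha
        · left
          have e : a + b - c = a := by omega
          rw [e]
          exact ha
        · right
          have hax : a = x := ha
          simp only [Set.mem_singleton_iff]
          omega
end

section
/- Let H₁ and H₂ be Arf numerical semigroups with H₁ ⊊ H₂. Then H₁ ∪ {max(H₂ \ H₁)} is an Arf numerical semigroup; equivalently, max(H₂ \ H₁) is an Arf special gap of H₁. -/
/-- If H₁ ⊊ H₂ are Arf numerical semigroups, then H₁ ∪ {max(H₂ \ H₁)} is an Arf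
numerical semigroup; equivalently, max(H₂ \ H₁) ∈ ArfG(H₁). -/
theorem max_diff_mem_arfSpecialGaps (H₁ H₂ : Set ℕ)
    (h1 : IsArfSemigroup H₁) (h2 : IsArfSemigroup H₂) (hss : H₁ ⊂ H₂) :
    IsArfSemigroup (H₁ ∪ {sSup (H₂ \ H₁)}) ∧
      sSup (H₂ \ H₁) ∈ ArfSpecialGaps H₁ := by
  obtain ⟨⟨h10, h1add, h1cof⟩, h1arf⟩ := h1
  obtain ⟨⟨h20, h2add, h2cof⟩, h2arf⟩ := h2
  have hDfin : (H₂ \ H₁).Finite := h1cof.subset (fun y hy => hy.2)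
  have hDne : (H₂ \ H₁).Nonempty := by
    obtain ⟨y, hy2, hy1⟩ := Set.exists_of_ssubset hss
    exact ⟨y, hy2, hy1⟩
  set x := sSup (H₂ \ H₁) with hx
  have hxD : x ∈ H₂ \ H₁ := Nat.sSup_mem hDne hDfin.bddAbove
  have hx2 : x ∈ H₂ := hxD.1
  have hx1 : x ∉ H₁ := hxD.2
  have hkey : ∀ y ∈ H₂, x < y → y ∈ H₁ := by
    intro y hy hlt
    by_contra hy1
    exact absurd (le_csSup hDfin.bddAbove ⟨hy, hy1⟩) (not_le.mpr hlt)
  have hsub : H₁ ∪ {x} ⊆ H₂ := by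
    rintro y (hy | rfl)
    · exact hss.1 hy
    · exact hx2
  have hmem : ∀ y ∈ H₂, x ≤ y → y ∈ H₁ ∪ {x} := by
    intro y hy hle
    rcases eq_or_lt_of_le hle with rfl | h
    · exact Or.inr rfl
    · exact Or.inl (hkey y hy h)
  have hxpos : 0 < x := Nat.pos_of_ne_zero (fun h => hx1 (h ▸ h10))
  have harf : IsArfSemigroup (H₁ ∪ {x}) := by
    refine ⟨⟨Or.inl h10, ?_, ?_⟩, ?_⟩
    · rintro a (ha | rfl) b (hb | rfl)
      · exact Or.inl (h1add a ha b hb)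
      · rcases Nat.eq_zero_or_pos a with rfl | hapos
        · simpa using (Or.inr rfl : x ∈ H₁ ∪ {x})
        · exact hmem _ (h2add a (hss.1 ha) x hx2) (by omega)
      · rcases Nat.eq_zero_or_pos b with rfl | hbpos
        · simpa using (Or.inr rfl : x ∈ H₁ ∪ {x})
        · exact hmem _ (h2add x hx2 b (hss.1 hb)) (by omega)
      · exact hmem _ (h2add x hx2 x hx2) (by omega)
    · exact h1cof.subset (Set.compl_subset_compl.mpr Set.subset_union_left)
    · intro a ha b hb c hc hcb hba
      have hmem2 : a + b - c ∈ H₂ := h2arf a (hsub ha) b (hsub hb) c (hsub hc) hcb hba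
      rcases ha with ha | ha
      · rcases hb with hb | hb
        · rcases hc with hc | hc
          · exact Or.inl (h1arf a ha b hb c hc hcb hba)
          · have : c = x := hc
            exact hmem _ hmem2 (by omega)
        · have : b = x := hb
          exact hmem _ hmem2 (by omega)
      · have : a = x := ha
        exact hmem _ hmem2 (by omega)
  exact ⟨harf, hx1, harf⟩
end

section
/- Let H be an Arf numerical semigroup and let {g₁, …, g_t} ⊆ SG(H) be a finite set of special gaps of H. The following are equivalent: (1) H is maximal, with respect to set inclusion, in the set of all Arf numerical semigroups S with S ∩ {g₁, …, g_t} = ∅; (2) ArfG(H) ⊆ {g₁, …, g_t}. -/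
/- If `x` is the largest element of `S \ H`, every element of `S` that is at least `x` lies in
`H ∪ {x}`; each operation of a numerical or Arf semigroup involving `x` produces a result at least
`x`, so `H ∪ {x}` inherits the closure properties of `H` and `S`. -/

theorem exists_mem_diff_forall_lt_mem {H S : Set ℕ} (hH : Hᶜ.Finite) (hne : (S \ H).Nonempty) :
    ∃ x ∈ S \ H, ∀ d ∈ S, x < d → d ∈ H := by
  obtain ⟨x, hx, hmax⟩ := Set.exists_max_image (S \ H) id (hH.subset fun _ hy => hy.2) hne
  refine ⟨x, hx, fun d hd hxd => ?_⟩
  by_contra hdH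
  exact absurd (hmax d ⟨hd, hdH⟩) (not_le.2 hxd)

section UnionSingleton

variable {H S : Set ℕ} {x : ℕ}

theorem mem_union_singleton_of_le (hx : ∀ d ∈ S, x < d → d ∈ H) {d : ℕ}
    (hd : d ∈ S) (hxd : x ≤ d) : d ∈ H ∪ {x} := by
  rcases hxd.eq_or_lt with rfl | hlt
  · exact Or.inr rfl
  · exact Or.inl (hx d hd hlt)

theorem IsNumericalSemigroup.union_singleton (hH : IsNumericalSemigroup H)
    (hS : IsNumericalSemigroup S) (hHS : H ⊆ S) (hxS : x ∈ S) (hx : ∀ d ∈ S, x < d → d ∈ H) :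
    IsNumericalSemigroup (H ∪ {x}) := by
  have hsub : H ∪ {x} ⊆ S := Set.union_subset hHS (Set.singleton_subset_iff.2 hxS)
  refine ⟨Or.inl hH.1, fun a ha b hb => ?_, hH.2.2.subset fun y hy hyH => hy (Or.inl hyH)⟩
  have hab : a + b ∈ S := hS.2.1 a (hsub ha) b (hsub hb)
  rcases ha with ha | rfl
  · rcases hb with hb | rfl
    · exact Or.inl (hH.2.1 a ha b hb)
    · exact mem_union_singleton_of_le hx hab (Nat.le_add_left _ _)
  · exact mem_union_singleton_of_le hx hab (Nat.le_add_right _ _)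

theorem IsArfSemigroup.union_singleton (hH : IsArfSemigroup H) (hS : IsArfSemigroup S)
    (hHS : H ⊆ S) (hxS : x ∈ S) (hx : ∀ d ∈ S, x < d → d ∈ H) :
    IsArfSemigroup (H ∪ {x}) := by
  have hsub : H ∪ {x} ⊆ S := Set.union_subset hHS (Set.singleton_subset_iff.2 hxS)
  refine ⟨hH.1.union_singleton hS.1 hHS hxS hx, fun a ha b hb c hc hcb hba => ?_⟩
  have habc : a + b - c ∈ S := hS.2 a (hsub ha) b (hsub hb) c (hsub hc) hcb hba
  have hle : x ∈ ({a, b, c} : Set ℕ) → x ≤ a + b - c := by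
    rintro (rfl | rfl | rfl) <;> omega
  rcases ha with ha | rfl
  · rcases hb with hb | rfl
    · rcases hc with hc | rfl
      · exact Or.inl (hH.2 a ha b hb c hc hcb hba)
      · exact mem_union_singleton_of_le hx habc (hle (by simp))
    · exact mem_union_singleton_of_le hx habc (hle (by simp))
  · exact mem_union_singleton_of_le hx habc (hle (by simp))

end UnionSingleton

theorem exists_mem_arfSpecialGaps_of_ssubset {H S : Set ℕ} (hH : IsArfSemigroup H)
    (hS : IsArfSemigroup S) (hHS : H ⊂ S) : ∃ x ∈ S, x ∈ ArfSpecialGaps H := by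
  obtain ⟨x, ⟨hxS, hxH⟩, hx⟩ :=
    exists_mem_diff_forall_lt_mem hH.1.2.2 (Set.sdiff_nonempty.2 hHS.not_subset)
  exact ⟨x, hxS, hxH, hH.union_singleton hS hHS.subset hxS hx⟩

/-- For an Arf numerical semigroup H and a finite set {g₁,…,g_t} of special gaps of H:
H is maximal among Arf numerical semigroups avoiding {g₁,…,g_t} iff ArfG(H) ⊆ {g₁,…,g_t}. -/
theorem maximal_iff_arfSpecialGaps_subset (H : Set ℕ) (hH : IsArfSemigroup H)
    (G : Finset ℕ) (hG : ↑G ⊆ SpecialGaps H) :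
    (∀ S : Set ℕ, IsArfSemigroup S → (∀ g ∈ G, g ∉ S) → H ⊆ S → S = H) ↔
      ArfSpecialGaps H ⊆ ↑G := by
  constructor
  · intro hmax x ⟨hxH, hArf⟩
    by_contra hxG
    have havoid : ∀ g ∈ G, g ∉ H ∪ {x} := by
      rintro g hg (hgH | rfl)
      exacts [(hG hg).1 hgH, hxG hg]
    exact hxH (hmax _ hArf havoid Set.subset_union_left ▸ Set.mem_union_right H rfl)
  · intro hsub S hS hSG hHS
    by_contra hne
    obtain ⟨x, hxS, hx⟩ :=
      exists_mem_arfSpecialGaps_of_ssubset hH hS (hHS.ssubset_of_ne (Ne.symm hne))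
    exact hSG x (hsub hx) hxS
end

section
/- Let c ≥ 2 and let H = {0} ∪ {m ∈ ℕ : m ≥ c}. Then H is an Arf numerical semigroup and the number of Arf special gaps of H equals ⌊c/2⌋. -/
/-- For c ≥ 2 and H = {0} ∪ {m : m ≥ c}, H is an Arf numerical semigroup and the
number of its Arf special gaps equals ⌊c/2⌋. -/
theorem card_arfSpecialGaps_of_halfline (c : ℕ) (hc : 2 ≤ c) :
    IsArfSemigroup ({0} ∪ {m : ℕ | c ≤ m}) ∧
      (ArfSpecialGaps ({0} ∪ {m : ℕ | c ≤ m})).ncard = c / 2 := by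
  set H : Set ℕ := {0} ∪ {m : ℕ | c ≤ m} with hH
  have hmem : ∀ n, n ∈ H ↔ n = 0 ∨ c ≤ n := by
    intro n; simp [hH]
  have hfin : ∀ S : Set ℕ, (∀ n, c ≤ n → n ∈ S) → (Sᶜ).Finite := by
    intro S hS
    apply Set.Finite.subset (Set.finite_Iio c)
    intro n hn
    simp only [Set.mem_compl_iff] at hn
    by_contra h
    exact hn (hS n (by simpa using h))
  have hArf : IsArfSemigroup H := by
    refine ⟨⟨?_, ?_, ?_⟩, ?_⟩
    · exact (hmem 0).2 (Or.inl rfl)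
    · intro a ha b hb
      rw [hmem] at ha hb ⊢; omega
    · exact hfin H (fun n hn => (hmem n).2 (Or.inr hn))
    · intro a ha b hb d hd h1 h2
      rw [hmem] at ha hb hd ⊢; omega
  refine ⟨hArf, ?_⟩
  have hset : ArfSpecialGaps H = Set.Ico ((c + 1) / 2) c := by
    ext x
    constructor
    · rintro ⟨hxH, ⟨⟨_, hadd, _⟩, _⟩⟩
      rw [hmem] at hxH
      push_neg at hxH
      have h2x : x + x ∈ H ∪ {x} := hadd x (Or.inr rfl) x (Or.inr rfl)
      have h2x' : x + x = 0 ∨ c ≤ x + x ∨ x + x = x := by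
        rcases h2x with h | h
        · rw [hmem] at h; tauto
        · simp at h; tauto
      simp only [Set.mem_Ico]
      omega
    · intro hx
      simp only [Set.mem_Ico] at hx
      have hmem2 : ∀ n, n ∈ H ∪ {x} ↔ n = 0 ∨ c ≤ n ∨ n = x := by
        intro n
        simp only [Set.mem_union, hmem, Set.mem_singleton_iff]
        tauto
      refine ⟨?_, ⟨(hmem2 0).2 (Or.inl rfl), ?_, ?_⟩, ?_⟩
      · rw [hmem]; omega
      · intro a ha b hb
        rw [hmem2] at ha hb ⊢; omega
      · exact hfin _ (fun n hn => (hmem2 n).2 (Or.inr (Or.inl hn)))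
      · intro a ha b hb d hd h1 h2
        rw [hmem2] at ha hb hd ⊢; omega
  rw [hset, ← Finset.coe_Ico, Set.ncard_coe_finset, Nat.card_Ico]
  omega
end

section
/- Let H ≠ ℕ be an Arf numerical semigroup. Then H is Arf-irreducible if and only if H is maximal, with respect to set inclusion, in the set of all Arf numerical semigroups S ≠ ℕ with Frobenius number F(S) = F(H). -/
lemma frob_not_mem {K : Set ℕ} (hK : IsNumericalSemigroup K) (hne : K ≠ Set.univ) :
    Frobenius K ∉ K := by
  have hne' : Kᶜ.Nonempty := Set.nonempty_compl.mpr hne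
  exact hne'.csSup_mem hK.2.2

lemma gt_frob_mem {K : Set ℕ} (hK : IsNumericalSemigroup K) {n : ℕ}
    (h : Frobenius K < n) : n ∈ K := by
  by_contra hn
  exact absurd (le_csSup hK.2.2.bddAbove hn) (not_le.mpr h)

lemma frob_eq_of_subset {H K : Set ℕ} (hH : IsNumericalSemigroup H)
    (hK : IsNumericalSemigroup K) (hHK : H ⊆ K) (hF : Frobenius H ∉ K) :
    Frobenius K = Frobenius H := by
  apply le_antisymm
  · exact csSup_le_csSup hH.2.2.bddAbove ⟨_, hF⟩ (Set.compl_subset_compl.mpr hHK)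
  · exact le_csSup hK.2.2.bddAbove hF

lemma arf_union_frob {H : Set ℕ} (hH : IsArfSemigroup H) (hne : H ≠ Set.univ) :
    IsArfSemigroup (H ∪ {Frobenius H}) := by
  set F := Frobenius H with hFdef
  have hFnot : F ∉ H := frob_not_mem hH.1 hne
  have hgt : ∀ n : ℕ, F < n → n ∈ H := fun n h => gt_frob_mem hH.1 h
  have hF0 : F ≠ 0 := fun h => hFnot (h ▸ hH.1.1)
  constructor
  · refine ⟨Or.inl hH.1.1, ?_, ?_⟩
    · intro a ha b hb
      rcases ha with ha | ha
      · rcases hb with hb | hb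
        · exact Or.inl (hH.1.2.1 a ha b hb)
        · simp only [Set.mem_singleton_iff] at hb; subst hb
          by_cases h0 : a = 0
          · subst h0; simp
          · exact Or.inl (hgt _ (by omega))
      · simp only [Set.mem_singleton_iff] at ha; subst ha
        rcases hb with hb | hb
        · by_cases h0 : b = 0
          · subst h0; simp
          · exact Or.inl (hgt _ (by omega))
        · simp only [Set.mem_singleton_iff] at hb; subst hb
          exact Or.inl (hgt _ (by omega))
    · exact hH.1.2.2.subset (Set.compl_subset_compl.mpr Set.subset_union_left)
  · intro a ha b hb c hc hcb hba
    by_cases h : F < a + b - c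
    · exact Or.inl (hgt _ h)
    · have hac : a ≤ a + b - c := by
        have hcb' : c ≤ b := hcb
        omega
      by_cases hEq : a + b - c = F
      · exact Or.inr (by simp [hEq])
      · have haF : a < F := by omega
        have ha' : a ∈ H := ha.resolve_right (by simp; omega)
        have hb' : b ∈ H := hb.resolve_right (by simp; omega)
        have hc' : c ∈ H := hc.resolve_right (by simp; omega)
        exact Or.inl (hH.2 a ha' b hb' c hc' hcb hba)

/-- An Arf numerical semigroup H ≠ ℕ is Arf-irreducible iff it is maximal among
Arf numerical semigroups S ≠ ℕ with the same Frobenius number. -/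
theorem arfIrreducible_iff_maximal_frobenius (H : Set ℕ)
    (hH : IsArfSemigroup H) (hne : H ≠ Set.univ) :
    ArfIrreducible H ↔
      ∀ S : Set ℕ, IsArfSemigroup S → S ≠ Set.univ → Frobenius S = Frobenius H →
        H ⊆ S → S = H := by
  have hFnotH : Frobenius H ∉ H := frob_not_mem hH.1 hne
  constructor
  · intro hirr S hS hSne hF hHS
    by_contra hSH
    apply hirr.2
    have hFnotS : Frobenius H ∉ S := by
      have := frob_not_mem hS.1 hSne
      rwa [hF] at this
    refine ⟨S, H ∪ {Frobenius H}, hS, arf_union_frob hH hne,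
      ⟨hHS, fun h => hSH (subset_antisymm h hHS)⟩,
      ⟨Set.subset_union_left, fun h => hFnotH (h (Or.inr rfl))⟩, ?_⟩
    ext x
    constructor
    · intro hx; exact ⟨hHS hx, Or.inl hx⟩
    · rintro ⟨hxS, hx | hx⟩
      · exact hx
      · exact absurd (hx ▸ hxS) hFnotS
  · intro hmax
    refine ⟨hH, ?_⟩
    rintro ⟨H₁, H₂, h1, h2, hs1, hs2, hEq⟩
    have key : ∀ K : Set ℕ, IsArfSemigroup K → H ⊂ K → Frobenius H ∉ K → False := by
      intro K hK hsK hFK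
      have hKne : K ≠ Set.univ := fun h => hFK (h ▸ Set.mem_univ _)
      have hfr : Frobenius K = Frobenius H :=
        frob_eq_of_subset hH.1 hK.1 hsK.1 hFK
      exact hsK.2 ((hmax K hK hKne hfr hsK.1) ▸ le_refl K)
    by_cases hF1 : Frobenius H ∈ H₁
    · by_cases hF2 : Frobenius H ∈ H₂
      · have : Frobenius H ∈ H₁ ∩ H₂ := ⟨hF1, hF2⟩
        rw [← hEq] at this
        exact hFnotH this
      · exact key H₂ h2 hs2 hF2
    · exact key H₁ h1 hs1 hF1
end

section
/- Let H ≠ ℕ be an Arf numerical semigroup. Then H is Arf-irreducible if and only if H is maximal, with respect to set inclusion, in the set of all Arf numerical semigroups S with F(H) ∉ S. -/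
/-- An Arf numerical semigroup H ≠ ℕ is Arf-irreducible iff it is maximal among
Arf numerical semigroups not containing F(H). -/
theorem arfIrreducible_iff_maximal_avoiding_frobenius (H : Set ℕ)
    (hH : IsArfSemigroup H) (hne : H ≠ Set.univ) :
    ArfIrreducible H ↔
      ∀ S : Set ℕ, IsArfSemigroup S → Frobenius H ∉ S → H ⊆ S → S = H := by
  obtain ⟨⟨h0, hadd, hfin⟩, harf⟩ := hH
  have hne' : Hᶜ.Nonempty := by rwa [Set.nonempty_compl]
  have hFmem : Frobenius H ∈ Hᶜ := Nat.sSup_mem hne' hfin.bddAbove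
  have hFnot : Frobenius H ∉ H := hFmem
  set F := Frobenius H with hFdef
  have hgt : ∀ n, F < n → n ∈ H := by
    intro n hn
    by_contra hcn
    exact absurd (le_csSup hfin.bddAbove (hcn : n ∈ Hᶜ)) (not_le.mpr hn)
  have hmemF : ∀ x ∈ H, x ≠ F := fun x hx h => hFnot (h ▸ hx)
  have hH' : IsArfSemigroup (H ∪ {F}) := by
    refine ⟨⟨Or.inl h0, ?_, ?_⟩, ?_⟩
    · intro a ha b hb
      simp only [Set.mem_union, Set.mem_singleton_iff] at ha hb
      rcases ha with ha | ha <;> rcases hb with hb | hb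
      · exact Or.inl (hadd a ha b hb)
      · rcases Nat.eq_zero_or_pos a with h | h
        · right; simp [h, hb]
        · exact Or.inl (hgt _ (by omega))
      · rcases Nat.eq_zero_or_pos b with h | h
        · right; simp [h, ha]
        · exact Or.inl (hgt _ (by omega))
      · have hF0 : 0 < F := Nat.pos_of_ne_zero (fun h => hFnot (h ▸ h0))
        exact Or.inl (hgt _ (by omega))
    · exact hfin.subset (Set.compl_subset_compl.mpr Set.subset_union_left)
    · intro a ha b hb c hc hcb hba
      simp only [Set.mem_union, Set.mem_singleton_iff] at ha hb hc
      rcases ha with ha | ha <;> rcases hb with hb | hb <;> rcases hc with hc | hc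
      · exact Or.inl (harf a ha b hb c hc hcb hba)
      · have hb' := hmemF b hb
        exact Or.inl (hgt _ (by omega))
      · have ha' := hmemF a ha
        have hc' := hmemF c hc
        exact Or.inl (hgt _ (by omega))
      · have ha' := hmemF a ha
        exact Or.inl (hgt _ (by omega))
      · have hb' := hmemF b hb
        rcases eq_or_lt_of_le hcb with h | h
        · have heq : a + b - c = F := by omega
          rw [heq]; exact Or.inr rfl
        · exact Or.inl (hgt _ (by omega))
      · exact absurd (by omega : b = F) (hmemF b hb)
      · have hc' := hmemF c hc
        exact Or.inl (hgt _ (by omega))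
      · have heq : a + b - c = F := by omega
        rw [heq]; exact Or.inr rfl
  constructor
  · rintro ⟨-, hirr⟩ S hS hFS hHS
    by_contra hSne
    refine hirr ⟨S, H ∪ {F}, hS, hH', ?_, ?_, ?_⟩
    · exact hHS.ssubset_of_ne (fun h => hSne h.symm)
    · exact Set.subset_union_left.ssubset_of_ne
        (fun h => hFnot (h ▸ (Or.inr rfl : F ∈ H ∪ {F})))
    · ext x
      constructor
      · intro hx
        exact ⟨hHS hx, Or.inl hx⟩
      · rintro ⟨hxS, hx | rfl⟩
        · exact hx
        · exact absurd hxS hFS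
  · intro hmax
    refine ⟨⟨⟨h0, hadd, hfin⟩, harf⟩, ?_⟩
    rintro ⟨H₁, H₂, hA1, hA2, hs1, hs2, heq⟩
    have hsub1 : H ⊆ H₁ := hs1.subset
    have hsub2 : H ⊆ H₂ := hs2.subset
    have hFni : F ∉ H₁ ∩ H₂ := heq ▸ hFnot
    rcases not_and_or.mp hFni with h | h
    · exact hs1.ne.symm (hmax H₁ hA1 h hsub1)
    · exact hs2.ne.symm (hmax H₂ hA2 h hsub2)
end

section
/- Let H ≠ ℕ be an Arf numerical semigroup. Then H is Arf-irreducible if and only if the set ArfG(H) of Arf special gaps of H has exactly one element (namely F(H)). -/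
/-- Key lemma: if H ⊊ H' are Arf semigroups, then max (H' \ H) is an Arf special gap. -/
lemma sSup_diff_mem_arfSpecialGaps (H H' : Set ℕ) (hH : IsArfSemigroup H)
    (hH' : IsArfSemigroup H') (hsub : H ⊆ H') (hne : H ≠ H') :
    sSup (H' \ H) ∈ ArfSpecialGaps H := by
  set x := sSup (H' \ H) with hxdef
  have hfin : (H' \ H).Finite := hH.1.2.2.subset (fun y hy => hy.2)
  have hnonem : (H' \ H).Nonempty :=
    Set.diff_nonempty.mpr (fun h => hne (subset_antisymm hsub h))
  have hx : x ∈ H' \ H := hnonem.csSup_mem hfin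
  have hmax : ∀ y ∈ H', x < y → y ∈ H := by
    intro y hy hlt
    by_contra h
    exact absurd (le_csSup hfin.bddAbove ⟨hy, h⟩) (not_le.mpr hlt)
  have helper : ∀ y ∈ H', x ≤ y → y ∈ H ∪ {x} := by
    intro y hy hle
    rcases eq_or_lt_of_le hle with h | h
    · exact Or.inr h.symm
    · exact Or.inl (hmax y hy h)
  have hsub' : H ∪ {x} ⊆ H' := by
    rintro y (hy | hy)
    · exact hsub hy
    · rw [Set.mem_singleton_iff] at hy; exact hy ▸ hx.1
  refine ⟨hx.2, ⟨⟨Or.inl hH.1.1, ?_, ?_⟩, ?_⟩⟩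
  · -- closure under addition
    rintro a ha b hb
    have haH' : a ∈ H' := hsub' ha
    have hbH' : b ∈ H' := hsub' hb
    have hab : a + b ∈ H' := hH'.1.2.1 a haH' b hbH'
    rcases ha with ha | ha
    · rcases hb with hb | hb
      · exact Or.inl (hH.1.2.1 a ha b hb)
      · rw [Set.mem_singleton_iff] at hb
        exact helper _ hab (by omega)
    · rw [Set.mem_singleton_iff] at ha
      exact helper _ hab (by omega)
  · -- finite complement
    exact hH.1.2.2.subset (Set.compl_subset_compl.mpr Set.subset_union_left)
  · -- Arf condition
    intro a ha b hb c hc hcb hba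
    have habc : a + b - c ∈ H' := hH'.2 a (hsub' ha) b (hsub' hb) c (hsub' hc) hcb hba
    rcases ha with ha | ha
    · rcases hb with hb | hb
      · rcases hc with hc | hc
        · exact Or.inl (hH.2 a ha b hb c hc hcb hba)
        · rw [Set.mem_singleton_iff] at hc
          exact helper _ habc (by omega)
      · rw [Set.mem_singleton_iff] at hb
        exact helper _ habc (by omega)
    · rw [Set.mem_singleton_iff] at ha
      exact helper _ habc (by omega)

lemma univ_arf : IsArfSemigroup (Set.univ : Set ℕ) :=
  ⟨⟨trivial, fun _ _ _ _ => trivial, by simp⟩, fun _ _ _ _ _ _ _ _ => trivial⟩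

lemma frobenius_mem_arfSpecialGaps (H : Set ℕ) (hH : IsArfSemigroup H)
    (hne : H ≠ Set.univ) : Frobenius H ∈ ArfSpecialGaps H := by
  have := sSup_diff_mem_arfSpecialGaps H Set.univ hH univ_arf (Set.subset_univ H) hne
  rw [Frobenius, Set.compl_eq_univ_diff]
  exact this

/-- An Arf numerical semigroup H ≠ ℕ is Arf-irreducible iff ArfG(H) has exactly one
element, namely F(H). -/
theorem arfIrreducible_iff_arfSpecialGaps_singleton (H : Set ℕ)
    (hH : IsArfSemigroup H) (hne : H ≠ Set.univ) :
    ArfIrreducible H ↔ ArfSpecialGaps H = {Frobenius H} := by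
  have hF : Frobenius H ∈ ArfSpecialGaps H := frobenius_mem_arfSpecialGaps H hH hne
  constructor
  · rintro ⟨-, hirr⟩
    apply Set.eq_singleton_iff_unique_mem.mpr
    refine ⟨hF, ?_⟩
    intro x hx
    by_contra hxF
    apply hirr
    refine ⟨H ∪ {x}, H ∪ {Frobenius H}, hx.2, hF.2, ?_, ?_, ?_⟩
    · rw [Set.union_singleton]; exact Set.ssubset_insert hx.1
    · rw [Set.union_singleton]; exact Set.ssubset_insert hF.1
    · ext y
      simp only [Set.mem_inter_iff, Set.mem_union, Set.mem_singleton_iff]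
      constructor
      · exact fun h => ⟨Or.inl h, Or.inl h⟩
      · rintro ⟨h1, h2⟩
        rcases h1 with h1 | h1
        · exact h1
        · rcases h2 with h2 | h2
          · exact h2
          · exact absurd (h1.symm.trans h2) hxF
  · intro hsg
    refine ⟨hH, ?_⟩
    rintro ⟨H₁, H₂, hA1, hA2, hs1, hs2, heq⟩
    have h1 : sSup (H₁ \ H) ∈ ArfSpecialGaps H :=
      sSup_diff_mem_arfSpecialGaps H H₁ hH hA1 hs1.subset hs1.ne
    have h2 : sSup (H₂ \ H) ∈ ArfSpecialGaps H :=
      sSup_diff_mem_arfSpecialGaps H H₂ hH hA2 hs2.subset hs2.ne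
    rw [hsg, Set.mem_singleton_iff] at h1 h2
    have hfin1 : (H₁ \ H).Finite := hH.1.2.2.subset (fun y hy => hy.2)
    have hfin2 : (H₂ \ H).Finite := hH.1.2.2.subset (fun y hy => hy.2)
    have hne1 : (H₁ \ H).Nonempty :=
      Set.diff_nonempty.mpr (fun h => hs1.ne (subset_antisymm hs1.subset h))
    have hne2 : (H₂ \ H).Nonempty :=
      Set.diff_nonempty.mpr (fun h => hs2.ne (subset_antisymm hs2.subset h))
    have m1 := hne1.csSup_mem hfin1
    have m2 := hne2.csSup_mem hfin2
    rw [h1] at m1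
    rw [h2] at m2
    have hFH : Frobenius H ∈ H₁ ∩ H₂ := ⟨m1.1, m2.1⟩
    rw [← heq] at hFH
    exact hF.1 hFH
end

section
/- Every Arf numerical semigroup H can be expressed as an intersection of finitely many Arf-irreducible numerical semigroups, each containing H. -/
/-- Every Arf numerical semigroup is a finite intersection of Arf-irreducible
numerical semigroups, each containing it. -/
theorem exists_decomposition_into_arfIrreducibles (H : Set ℕ)
    (hH : IsArfSemigroup H) :
    ∃ F : Set (Set ℕ), F.Finite ∧ F.Nonempty ∧
      (∀ S ∈ F, ArfIrreducible S ∧ H ⊆ S) ∧ H = ⋂₀ F := by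
  have key : ∀ n : ℕ, ∀ H : Set ℕ, IsArfSemigroup H → Hᶜ.ncard ≤ n →
      ∃ F : Set (Set ℕ), F.Finite ∧ F.Nonempty ∧
        (∀ S ∈ F, ArfIrreducible S ∧ H ⊆ S) ∧ H = ⋂₀ F := by
    intro n
    induction n using Nat.strong_induction_on with
    | _ n ih =>
      intro H hH hcard
      by_cases hirr : ArfIrreducible H
      · refine ⟨{H}, Set.finite_singleton H, Set.singleton_nonempty H, ?_,
          (Set.sInter_singleton H).symm⟩
        rintro S rfl
        exact ⟨hirr, le_refl _⟩
      · rw [ArfIrreducible, not_and] at hirr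
        obtain ⟨H₁, H₂, hA1, hA2, hs1, hs2, heq⟩ := not_not.mp (hirr hH)
        have hfin : Hᶜ.Finite := hH.1.2.2
        have hlt1 : H₁ᶜ.ncard < n := lt_of_lt_of_le
          (Set.ncard_lt_ncard (compl_lt_compl_iff_lt.mpr hs1) hfin) hcard
        have hlt2 : H₂ᶜ.ncard < n := lt_of_lt_of_le
          (Set.ncard_lt_ncard (compl_lt_compl_iff_lt.mpr hs2) hfin) hcard
        obtain ⟨F₁, hF₁f, hF₁n, hF₁m, hF₁e⟩ := ih _ hlt1 H₁ hA1 le_rfl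
        obtain ⟨F₂, hF₂f, hF₂n, hF₂m, hF₂e⟩ := ih _ hlt2 H₂ hA2 le_rfl
        refine ⟨F₁ ∪ F₂, hF₁f.union hF₂f, hF₁n.mono Set.subset_union_left, ?_, ?_⟩
        · intro S hS
          rcases hS with hS | hS
          · exact ⟨(hF₁m S hS).1, (heq ▸ Set.inter_subset_left).trans (hF₁m S hS).2⟩
          · exact ⟨(hF₂m S hS).1, (heq ▸ Set.inter_subset_right).trans (hF₂m S hS).2⟩
        · rw [Set.sInter_union, ← hF₁e, ← hF₂e, heq]
  exact key Hᶜ.ncard H hH le_rfl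
end

section
/- Let H be an Arf numerical semigroup and let QA(H) be the set of Arf-irreducible numerical semigroups containing H. Then H equals the intersection of the minimal elements (with respect to set inclusion) of QA(H). -/
/-!
Since an Arf semigroup `H` has finite complement, it has only finitely many oversemigroups.
Given a gap `x` of `H`, an Arf semigroup maximal among those containing `H` and avoiding `x` is
Arf-irreducible: if it were the intersection of two strictly larger Arf semigroups, one of them
would still avoid `x`, contradicting maximality. Below it sits a minimal element of `QA(H)`,
which then also avoids `x`.
-/

lemma Set.finite_supersets_of_finite_compl {α : Type*} {s : Set α} (hs : sᶜ.Finite) :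
    {t : Set α | s ⊆ t}.Finite :=
  (hs.finite_subsets.preimage compl_injective.injOn).subset fun _ hst =>
    Set.compl_subset_compl.mpr hst

lemma ArfIrreducible.of_maximal_notMem {S : Set ℕ} {x : ℕ}
    (hS : Maximal (fun T => IsArfSemigroup T ∧ x ∉ T) S) : ArfIrreducible S := by
  refine ⟨hS.prop.1, ?_⟩
  rintro ⟨H₁, H₂, hH₁, hH₂, hS₁, hS₂, rfl⟩
  have hx : x ∉ H₁ ∨ x ∉ H₂ := not_and_or.mp hS.prop.2
  rcases hx with hx | hx
  · exact hS₁.ne (hS.eq_of_subset ⟨hH₁, hx⟩ hS₁.subset)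
  · exact hS₂.ne (hS.eq_of_subset ⟨hH₂, hx⟩ hS₂.subset)

lemma exists_arfIrreducible_superset_notMem {H : Set ℕ} {x : ℕ} (hH : IsArfSemigroup H)
    (hx : x ∉ H) : ∃ S, ArfIrreducible S ∧ H ⊆ S ∧ x ∉ S := by
  have hfin : {S | IsArfSemigroup S ∧ H ⊆ S ∧ x ∉ S}.Finite :=
    (Set.finite_supersets_of_finite_compl hH.1.2.2).subset fun _ hS => hS.2.1
  obtain ⟨S, hHS, hS⟩ := hfin.exists_le_maximal ⟨hH, subset_rfl, hx⟩
  have hSmax : Maximal (fun T => IsArfSemigroup T ∧ x ∉ T) S :=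
    ⟨⟨hS.prop.1, hS.prop.2.2⟩, fun T hT hST => hS.2 ⟨hT.1, hHS.trans hST, hT.2⟩ hST⟩
  exact ⟨S, .of_maximal_notMem hSmax, hHS, hS.prop.2.2⟩

lemma exists_minimal_QA_subset {H S : Set ℕ} (hH : Hᶜ.Finite) (hS : S ∈ QA H) :
    ∃ T, Minimal (· ∈ QA H) T ∧ T ⊆ S := by
  have hfin : (QA H).Finite := (Set.finite_supersets_of_finite_compl hH).subset fun _ hT => hT.2
  obtain ⟨T, hTS, hT⟩ := hfin.exists_le_minimal hS
  exact ⟨T, hT, hTS⟩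

/-- An Arf numerical semigroup equals the intersection of the minimal elements of
the set QA(H) of Arf-irreducible numerical semigroups containing it. -/
theorem eq_sInter_minimals_QA (H : Set ℕ) (hH : IsArfSemigroup H) :
    H = ⋂₀ {S | S ∈ QA H ∧ ∀ T ∈ QA H, T ⊆ S → T = S} := by
  refine subset_antisymm (fun y hy S hS => hS.1.2 hy) fun x hx => ?_
  by_contra hxH
  obtain ⟨S, hSirr, hHS, hxS⟩ := exists_arfIrreducible_superset_notMem hH hxH
  obtain ⟨T, hT, hTS⟩ := exists_minimal_QA_subset hH.1.2.2 ⟨hSirr, hHS⟩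
  exact hxS (hTS (hx T ⟨hT.prop, fun T' hT' hT'T => hT.eq_of_subset hT' hT'T⟩))
end

section
/- Let H be an Arf numerical semigroup and let QA(H) be the set of Arf-irreducible numerical semigroups containing H. If H = H₁ ∩ ⋯ ∩ H_r with H₁, …, H_r ∈ QA(H), then there exist minimal elements H̄₁, …, H̄_r of QA(H) (with respect to set inclusion), with H̄_i ⊆ H_i for each i, such that H = H̄₁ ∩ ⋯ ∩ H̄_r. -/
/-- If an Arf numerical semigroup H equals H₁ ∩ ⋯ ∩ H_r with all H_i ∈ QA(H), then
there exist minimal elements H̄_i of QA(H), H̄_i ⊆ H_i, with H = H̄₁ ∩ ⋯ ∩ H̄_r. -/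
theorem exists_minimal_decomposition (H : Set ℕ) (hH : IsArfSemigroup H)
    (r : ℕ) (f : Fin r → Set ℕ) (hf : ∀ i, f i ∈ QA H)
    (hint : H = ⋂ i, f i) :
    ∃ g : Fin r → Set ℕ,
      (∀ i, g i ∈ QA H ∧ (∀ T ∈ QA H, T ⊆ g i → T = g i) ∧ g i ⊆ f i) ∧
      H = ⋂ i, g i := by
  classical
  have hfin : (Hᶜ : Set ℕ).Finite := hH.1.2.2
  set F : Finset ℕ := hfin.toFinset with hF
  let μ : Set ℕ → ℕ := fun S => (F.filter (· ∈ S)).card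
  have key : ∀ i, ∃ g, g ∈ QA H ∧ (∀ T ∈ QA H, T ⊆ g → T = g) ∧ g ⊆ f i := by
    intro i
    have hne : ∃ n, ∃ S, S ∈ QA H ∧ S ⊆ f i ∧ μ S = n :=
      ⟨μ (f i), f i, hf i, subset_rfl, rfl⟩
    obtain ⟨S, hSQ, hSf, hSn⟩ := Nat.find_spec hne
    refine ⟨S, hSQ, ?_, hSf⟩
    intro T hTQ hTS
    by_contra hne'
    have hss : T ⊂ S := lt_of_le_of_ne hTS hne'
    obtain ⟨x, hxS, hxT⟩ := Set.exists_of_ssubset hss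
    have hxH : x ∉ H := fun hx => hxT (hTQ.2 hx)
    have hxF : x ∈ F := by simpa [hF, Set.Finite.mem_toFinset] using hxH
    have hsub : F.filter (· ∈ T) ⊂ F.filter (· ∈ S) := by
      have hsub' : F.filter (· ∈ T) ⊆ F.filter (· ∈ S) := by
        intro y hy
        rw [Finset.mem_filter] at hy ⊢
        exact ⟨hy.1, hTS hy.2⟩
      refine (Finset.ssubset_iff_of_subset hsub').2 ⟨x, ?_, ?_⟩
      · exact Finset.mem_filter.2 ⟨hxF, hxS⟩
      · simp [Finset.mem_filter, hxT]
    have hlt : μ T < Nat.find hne := by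
      calc μ T < μ S := Finset.card_lt_card hsub
        _ = Nat.find hne := hSn
    exact Nat.find_min hne hlt ⟨T, hTQ, hTS.trans hSf, rfl⟩
  choose g hg1 hg2 hg3 using key
  refine ⟨g, fun i => ⟨hg1 i, hg2 i, hg3 i⟩, ?_⟩
  apply Set.Subset.antisymm
  · exact Set.subset_iInter fun i => (hg1 i).2
  · refine (Set.iInter_mono hg3).trans ?_
    rw [← hint]
end

section
/- Let H be an Arf numerical semigroup. Then the set A(H) of all Arf numerical semigroups containing H is a Frobenius variety: it is nonempty, closed under pairwise intersection, and if S ∈ A(H) with S ≠ ℕ then S ∪ {F(S)} ∈ A(H). -/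
/-- The set of Arf numerical semigroups containing a given Arf numerical semigroup H
is a Frobenius variety: nonempty, closed under intersection, and closed under
adjoining the Frobenius number. -/
theorem arfOver_is_frobenius_variety (H : Set ℕ) (hH : IsArfSemigroup H) :
    (ArfOver H).Nonempty ∧
    (∀ S ∈ ArfOver H, ∀ S' ∈ ArfOver H, S ∩ S' ∈ ArfOver H) ∧
    (∀ S ∈ ArfOver H, S ≠ Set.univ → S ∪ {Frobenius S} ∈ ArfOver H)  := by
  refine ⟨⟨H, hH, subset_rfl⟩, ?_, ?_⟩
  · rintro S ⟨⟨⟨hS0, hSadd, hSfin⟩, hSarf⟩, hHS⟩ S' ⟨⟨⟨hS0', hSadd', hSfin'⟩, hSarf'⟩, hHS'⟩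
    refine ⟨⟨⟨⟨hS0, hS0'⟩, ?_, ?_⟩, ?_⟩, ?_⟩
    · rintro a ⟨ha, ha'⟩ b ⟨hb, hb'⟩
      exact ⟨hSadd a ha b hb, hSadd' a ha' b hb'⟩
    · rw [Set.compl_inter]; exact hSfin.union hSfin'
    · rintro a ⟨ha, ha'⟩ b ⟨hb, hb'⟩ c ⟨hc, hc'⟩ h1 h2
      exact ⟨hSarf a ha b hb c hc h1 h2, hSarf' a ha' b hb' c hc' h1 h2⟩
    · exact fun x hx => ⟨hHS hx, hHS' hx⟩
  · rintro S ⟨⟨⟨hS0, hSadd, hSfin⟩, hSarf⟩, hHS⟩ hne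
    set F := Frobenius S with hFdef
    have hne' : Sᶜ.Nonempty := by rw [Set.nonempty_compl]; exact hne
    have hF : F ∉ S := hne'.csSup_mem hSfin
    have hgt : ∀ n, F < n → n ∈ S := by
      intro n hn
      by_contra h
      exact absurd (le_csSup hSfin.bddAbove h) (not_le.mpr hn)
    have hFpos : 0 < F := Nat.pos_of_ne_zero (fun h => hF (h ▸ hS0))
    have hmem : ∀ x ∈ S ∪ ({F} : Set ℕ), x ∈ S ∨ x = F := by
      rintro x (hx | hx)
      · exact Or.inl hx
      · exact Or.inr hx
    have hgtF : ∀ x, x ∈ S ∪ ({F} : Set ℕ) → F ≤ x → x ∈ S ∪ ({F} : Set ℕ) := fun x hx _ => hx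
    have hSsub : S ⊆ S ∪ ({F} : Set ℕ) := Set.subset_union_left
    have hFin : F ∈ S ∪ ({F} : Set ℕ) := Or.inr rfl
    have hneF : ∀ x ∈ S, x ≠ F := fun x hx h => hF (h ▸ hx)
    refine ⟨⟨⟨Or.inl hS0, ?_, ?_⟩, ?_⟩, fun x hx => Or.inl (hHS hx)⟩
    · -- addition
      intro a ha b hb
      rcases hmem a ha with ha' | rfl
      · rcases hmem b hb with hb' | rfl
        · exact Or.inl (hSadd a ha' b hb')
        · rcases Nat.eq_zero_or_pos a with rfl | hapos
          · simp
          · exact Or.inl (hgt _ (by omega))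
      · rcases hmem b hb with hb' | rfl
        · rcases Nat.eq_zero_or_pos b with rfl | hbpos
          · simp
          · exact Or.inl (hgt _ (by omega))
        · exact Or.inl (hgt _ (by omega))
    · -- finite complement
      exact hSfin.subset (Set.compl_subset_compl.mpr hSsub)
    · -- Arf
      intro a ha b hb c hc hcb hba
      rcases hmem c hc with hc' | rfl
      · rcases hmem b hb with hb' | rfl
        · rcases hmem a ha with ha' | rfl
          · exact Or.inl (hSarf a ha' b hb' c hc' hcb hba)
          · have hbF : b < F := lt_of_le_of_ne hba (hneF b hb')
            rcases Nat.eq_or_lt_of_le hcb with rfl | hlt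
            · have h : F + c - c = F := by omega
              rw [h]; exact hFin
            · exact Or.inl (hgt _ (by omega))
        · have hcF : c < F := lt_of_le_of_ne hcb (hneF c hc')
          rcases hmem a ha with ha' | rfl
          · have haF : F < a := lt_of_le_of_ne hba (Ne.symm (hneF a ha'))
            exact Or.inl (hgt _ (by omega))
          · exact Or.inl (hgt _ (by omega))
      · -- c = F
        rcases hmem b hb with hb' | rfl
        · have hbF : F < b := lt_of_le_of_ne (hcb) (Ne.symm (hneF b hb'))
          have haF : F < a := lt_of_lt_of_le hbF hba
          exact Or.inl (hgt _ (by omega))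
        · have : a + F - F = a := by omega
          rw [this]; exact ha
end

section
/- Let H ≠ ℕ be an Arf numerical semigroup, written as H = {h₀ = 0 < h₁ < ⋯ < h_n} ∪ {m ∈ ℕ : m ≥ h_n}, where h₀, …, h_n are exactly the elements of H not exceeding the conductor h_n = F(H) + 1, and set x_j = h_j − h_{j−1} for j = 1, …, n. For 1 ≤ i ≤ n, the element h_i belongs to the minimal Arf system of generators of H — equivalently, H \ {h_i} is an Arf numerical semigroup — if and only if x_j ≠ x_{j+1} + ⋯ + x_i for all j with 1 ≤ j < i. -/
/-- Let H ≠ ℕ be an Arf numerical semigroup with small elements 0 = h₀ < h₁ < ⋯ < hₙ,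
hₙ = F(H) + 1, and xⱼ = hⱼ - h_{j-1}. For 1 ≤ i ≤ n, h i is a minimal Arf generator
(equivalently H \ {h i} is Arf) iff xⱼ ≠ x_{j+1} + ⋯ + x_i for all 1 ≤ j < i. -/
theorem minimal_arf_generator_iff (H : Set ℕ) (hH : IsArfSemigroup H)
    (hne : H ≠ Set.univ) (n : ℕ) (h : ℕ → ℕ) (h0 : h 0 = 0)
    (hmono : ∀ i < n, h i < h (i + 1))
    (hcond : h n = Frobenius H + 1)
    (hdesc : H = {m | ∃ i ≤ n, m = h i} ∪ {m | h n ≤ m})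
    (x : ℕ → ℕ) (hx : ∀ j, 1 ≤ j → j ≤ n → x j = h j - h (j - 1))
    (i : ℕ) (hi1 : 1 ≤ i) (hin : i ≤ n) :
    IsArfSemigroup (H \ {h i}) ↔
      ∀ j, 1 ≤ j → j < i → x j ≠ ∑ k ∈ Finset.Icc (j + 1) i, x k := by
  obtain ⟨⟨h0H, haddH, hfin⟩, hArf⟩ := hH
  -- strict monotonicity of h on [0, n]
  have hsm : ∀ k, k ≤ n → ∀ j, j < k → h j < h k := by
    intro k
    induction k with
    | zero => intro _ j hj; omega
    | succ k ih =>
      intro hk j hj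
      have hk' : h k < h (k + 1) := hmono k (by omega)
      rcases Nat.lt_succ_iff_lt_or_eq.mp hj with h' | h'
      · exact lt_trans (ih (by omega) j h') hk'
      · subst h'; exact hk'
  have hle : ∀ j k, j ≤ k → k ≤ n → h j ≤ h k := by
    intro j k hjk hk
    rcases eq_or_lt_of_le hjk with h' | h'
    · subst h'; exact le_refl _
    · exact le_of_lt (hsm k hk j h')
  have hidx : ∀ j k, j ≤ n → k ≤ n → h j < h k → j < k := by
    intro j k hj hk hlt
    by_contra hcon
    push_neg at hcon
    exact absurd hlt (not_lt.2 (hle k j hcon hj))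
  have hmem : ∀ j, j ≤ n → h j ∈ H := by
    intro j hj
    rw [hdesc]; exact Set.mem_union_left _ ⟨j, hj, rfl⟩
  have hfind : ∀ m, m ∈ H → m < h i → ∃ s, s < i ∧ m = h s := by
    intro m hm hmi
    rw [hdesc] at hm
    rcases hm with ⟨j, hj, rfl⟩ | hm
    · exact ⟨j, hidx j i hj hin hmi, rfl⟩
    · exact absurd hmi (not_lt.2 (le_trans (hle i n hin le_rfl) hm))
  -- telescoping sum
  have tele : ∀ m, m ≤ n → ∀ j, j ≤ m → ∑ k ∈ Finset.Icc (j + 1) m, x k = h m - h j := by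
    intro m
    induction m with
    | zero =>
      intro _ j hj
      have hj0 : j = 0 := by omega
      subst hj0
      simp
    | succ m ih =>
      intro hm j hj
      rcases eq_or_lt_of_le hj with h' | h'
      · subst h'
        rw [Finset.Icc_eq_empty (by omega : ¬ m + 1 + 1 ≤ m + 1)]
        simp
      · have hjm : j ≤ m := by omega
        rw [Finset.sum_Icc_succ_top (by omega : j + 1 ≤ m + 1), ih (by omega) j hjm,
            hx (m + 1) (by omega) hm]
        have h1 : h j ≤ h m := hle j m hjm (by omega)
        have h2 : h m < h (m + 1) := hmono m (by omega)
        simp only [Nat.add_sub_cancel]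
        omega
  have hipos : 0 < h i := by
    have := hsm i hin 0 (by omega)
    omega
  constructor
  · -- forward direction
    intro hArfD j hj1 hji
    have hjn : j ≤ n := by omega
    have hj1n : j - 1 ≤ n := by omega
    have hjlt : h j < h i := hsm i hin j hji
    have hj1lt : h (j - 1) < h j := hsm j hjn (j - 1) (by omega)
    rw [hx j hj1 hjn, tele i hin j (le_of_lt hji)]
    intro heq
    have hhh : h j + h j - h (j - 1) = h i := by omega
    have hmem1 : h j ∈ H \ {h i} := ⟨hmem j hjn, by simp; omega⟩
    have hmem2 : h (j - 1) ∈ H \ {h i} := ⟨hmem (j - 1) hj1n, by simp; omega⟩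
    have := hArfD.2 (h j) hmem1 (h j) hmem1 (h (j - 1)) hmem2 (le_of_lt hj1lt) le_rfl
    rw [hhh] at this
    exact this.2 rfl
  · -- backward direction
    intro hrhs
    have hC : ∀ j, 1 ≤ j → j < i → h j + h j ≠ h i + h (j - 1) := by
      intro j hj1 hji heq
      have hjn : j ≤ n := by omega
      have hj1lt : h (j - 1) < h j := hsm j hjn (j - 1) (by omega)
      have hjlt : h j < h i := hsm i hin j hji
      refine hrhs j hj1 hji ?_
      rw [hx j hj1 hjn, tele i hin j (le_of_lt hji)]
      omega
    -- key induction: no representation h i = h p + h q - h r with r < q ≤ p < i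
    have key : ∀ μ p q r, r < q → q ≤ p → p < i →
        h p + h q = h i + h r →
        (h i - h r) * (h i + 1) + (h i - h p) ≤ μ → False := by
      intro μ
      induction μ with
      | zero =>
        intro p q r hrq hqp hpi heq hμ
        have h1 : h r < h i :=
          lt_of_lt_of_le (hsm q (by omega) r hrq)
            (le_trans (hle q p hqp (by omega)) (le_of_lt (hsm i hin p hpi)))
        have h2 : h i + 1 ≤ (h i - h r) * (h i + 1) :=
          Nat.le_mul_of_pos_left _ (by omega)
        have h3 : ∀ B, h i + 1 ≤ B → B + (h i - h p) ≤ 0 → False := by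
          intro B hb1 hb2; omega
        exact h3 _ h2 hμ
      | succ μ ih =>
        intro p q r hrq hqp hpi heq hμ
        have hpn : p ≤ n := by omega
        have hqn : q ≤ n := by omega
        have hrn : r ≤ n := by omega
        have hrq' : h r < h q := hsm q hqn r hrq
        have hqp' : h q ≤ h p := hle q p hqp hpn
        have hpi' : h p < h i := hsm i hin p hpi
        have ht : h q + h q - h r ∈ H :=
          hArf (h q) (hmem q hqn) (h q) (hmem q hqn) (h r) (hmem r hrn)
            (le_of_lt hrq') le_rfl
        have ht_le : h q + h q - h r ≤ h i := by omega
        rcases eq_or_lt_of_le ht_le with hti | hti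
        · -- 2 h q - h r = h i
          have heq2 : h q + h q = h i + h r := by omega
          by_cases hr1 : r = q - 1
          · exact hC q (by omega) (by omega) (by rw [← hr1]; exact heq2)
          · have hq1 : 1 ≤ q := by omega
            have hrq1 : r < q - 1 := by omega
            have hq1n : q - 1 ≤ n := by omega
            have hr_lt : h r < h (q - 1) := hsm (q - 1) hq1n r hrq1
            have hq1_lt : h (q - 1) < h q := hsm q hqn (q - 1) (by omega)
            have ht' : h q + h q - h (q - 1) ∈ H :=
              hArf (h q) (hmem q hqn) (h q) (hmem q hqn) (h (q - 1)) (hmem (q - 1) hq1n)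
                (le_of_lt hq1_lt) le_rfl
            have ht'_lt : h q + h q - h (q - 1) < h i := by omega
            obtain ⟨s, hsi, hs⟩ := hfind _ ht' ht'_lt
            have hsn : s ≤ n := by omega
            have hseq : h s + h (q - 1) = h i + h r := by omega
            have hq1s : q - 1 < s := hidx (q - 1) s hq1n hsn (by omega)
            have hps : h p < h s := by omega
            have hsi' : h s < h i := hsm i hin s hsi
            refine ih s (q - 1) r hrq1 (by omega) hsi (by omega) ?_
            have hmeas : ∀ B, B + (h i - h p) ≤ μ + 1 → B + (h i - h s) ≤ μ := by
              intro B hB; omega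
            exact hmeas _ hμ
        · -- 2 h q - h r < h i
          have hq_lt_p : h q < h p := by omega
          have hqplt : q < p := hidx q p hqn hpn hq_lt_p
          obtain ⟨s, hsi, hs⟩ := hfind _ ht hti
          have hsn : s ≤ n := by omega
          have hq_lt_s : h q < h s := by omega
          have hqs : q < s := hidx q s hqn hsn hq_lt_s
          have heq3 : h p + h s = h i + h q := by omega
          have hm1 : (h i - h q) * (h i + 1) + (h i + 1) ≤ (h i - h r) * (h i + 1) := by
            have hstep : (h i - h q) + 1 ≤ h i - h r := by omega
            calc (h i - h q) * (h i + 1) + (h i + 1)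
                = ((h i - h q) + 1) * (h i + 1) := by ring
              _ ≤ (h i - h r) * (h i + 1) := Nat.mul_le_mul_right _ hstep
          have hmeas : ∀ A B C, C ≤ h i → A + (h i + 1) ≤ B →
              B + (h i - h p) ≤ μ + 1 → A + C ≤ μ := by
            intro A B C hc h1 h2; omega
          rcases le_total p s with hps | hsp
          · exact ih s p q hqplt hps hsi (by omega)
              (hmeas _ _ _ (Nat.sub_le _ _) hm1 hμ)
          · exact ih p s q hqs hsp hpi (by omega)
              (hmeas _ _ _ (Nat.sub_le _ _) hm1 hμ)
    -- no a + b - c = h i with a, b, c ∈ H \ {h i}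
    have nokey : ∀ a, a ∈ H → a ≠ h i → ∀ b, b ∈ H → b ≠ h i → ∀ c, c ∈ H →
        c ≤ b → b ≤ a → a + b - c ≠ h i := by
      intro a ha hane b hb hbne c hc hcb hba heq
      have halt : a < h i := by omega
      have hblt : b < h i := by omega
      have hclt : c < h i := by omega
      obtain ⟨p, hpi, hap⟩ := hfind a ha halt
      obtain ⟨q, hqi, hbq⟩ := hfind b hb hblt
      obtain ⟨r, hri, hcr⟩ := hfind c hc hclt
      subst hap; subst hbq; subst hcr
      have hrq : r < q := hidx r q (by omega) (by omega) (by omega)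
      have hqp : q ≤ p := by
        by_contra hcon
        push_neg at hcon
        exact absurd hba (not_le.2 (hsm q (by omega) p hcon))
      exact key ((h i - h r) * (h i + 1) + (h i - h p)) p q r hrq hqp hpi (by omega) le_rfl
    refine ⟨⟨⟨h0H, by simp; omega⟩, ?_, ?_⟩, ?_⟩
    · -- closed under addition
      intro a ha b hb
      refine ⟨haddH a ha.1 b hb.1, ?_⟩
      intro habs
      simp only [Set.mem_singleton_iff] at habs
      rcases le_total b a with hba | hab
      · exact nokey a ha.1 ha.2 b hb.1 hb.2 0 h0H (Nat.zero_le _) hba (by omega)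
      · exact nokey b hb.1 hb.2 a ha.1 ha.2 0 h0H (Nat.zero_le _) hab (by omega)
    · -- finite complement
      apply Set.Finite.subset (hfin.union (Set.finite_singleton (h i)))
      intro z hz
      by_cases hzH : z ∈ H
      · right
        by_contra hzi
        exact hz ⟨hzH, hzi⟩
      · exact Or.inl hzH
    · -- Arf property
      intro a ha b hb c hc hcb hba
      refine ⟨hArf a ha.1 b hb.1 c hc.1 hcb hba, ?_⟩
      exact fun habs => nokey a ha.1 ha.2 b hb.1 hb.2 c hc.1 hcb hba habs
end

section
/- Let H ≠ ℕ be an Arf numerical semigroup, written as H = {h₀ = 0 < h₁ < ⋯ < h_n} ∪ {m ∈ ℕ : m ≥ h_n}, where h₀, …, h_n are exactly the elements of H not exceeding the conductor h_n = F(H) + 1, and set x_j = h_j − h_{j−1} for j = 1, …, n. Then F(H) + 2 belongs to the minimal Arf system of generators of H — equivalently, H \ {F(H) + 2} is an Arf numerical semigroup — if and only if x_j ≠ x_{j+1} + ⋯ + x_n + 1 for all j ∈ {1, …, n}. -/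

private lemma mono_le' (n : ℕ) (h : ℕ → ℕ) (hmono : ∀ i < n, h i < h (i + 1)) :
    ∀ i j, i ≤ j → j ≤ n → h i ≤ h j := by
  intro i j
  induction j with
  | zero => intro h1 _; obtain rfl := Nat.le_zero.mp h1; exact le_rfl
  | succ m ih =>
    intro h1 h2
    rcases Nat.eq_or_lt_of_le h1 with rfl | hlt
    · exact le_rfl
    · exact le_trans (ih (by omega) (by omega)) (le_of_lt (hmono m (by omega)))

private lemma mono_lt' (n : ℕ) (h : ℕ → ℕ) (hmono : ∀ i < n, h i < h (i + 1)) :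
    ∀ i j, i < j → j ≤ n → h i < h j := by
  intro i j hij hjn
  have h1 : h i ≤ h (j - 1) := mono_le' n h hmono i (j - 1) (by omega) (by omega)
  have h2 := hmono (j - 1) (by omega)
  have h3 : j - 1 + 1 = j := by omega
  rw [h3] at h2
  omega

private lemma tele' (n : ℕ) (h : ℕ → ℕ) (hmono : ∀ i < n, h i < h (i + 1)) :
    ∀ m, m ≤ n → ∀ j, j ≤ m →
      (∑ k ∈ Finset.Icc (j + 1) m, (h k - h (k - 1))) = h m - h j := by
  intro m
  induction m with
  | zero => intro _ j hj; obtain rfl := Nat.le_zero.mp hj; simp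
  | succ m ih =>
    intro hmn j hj
    by_cases hjm : j = m + 1
    · subst hjm; rw [Finset.Icc_eq_empty (by omega)]; simp
    · have hjm' : j ≤ m := by omega
      rw [Finset.sum_Icc_succ_top (by omega : j + 1 ≤ m + 1), ih (by omega) j hjm']
      have h1 : h m ≤ h (m + 1) := le_of_lt (hmono m (by omega))
      have h2 : h j ≤ h m := mono_le' n h hmono j m hjm' (by omega)
      simp only [Nat.add_sub_cancel]
      omega

private lemma memH' (H : Set ℕ) (n : ℕ) (h : ℕ → ℕ)
    (hdesc : H = {m | ∃ i ≤ n, m = h i} ∪ {m | h n ≤ m}) :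
    ∀ i, i ≤ n → h i ∈ H := by
  intro i hi; rw [hdesc]; exact Or.inl ⟨i, hi, rfl⟩

private lemma idxH' (H : Set ℕ) (n : ℕ) (h : ℕ → ℕ)
    (hdesc : H = {m | ∃ i ≤ n, m = h i} ∪ {m | h n ≤ m}) :
    ∀ m ∈ H, m ≤ h n → ∃ i, i ≤ n ∧ m = h i := by
  intro m hm hmn
  rw [hdesc] at hm
  rcases hm with ⟨i, hi, rfl⟩ | hge
  · exact ⟨i, hi, rfl⟩
  · exact ⟨n, le_rfl, le_antisymm hmn hge⟩

private lemma descent' (H : Set ℕ)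
    (harf : ∀ a ∈ H, ∀ b ∈ H, ∀ c ∈ H, c ≤ b → b ≤ a → a + b - c ∈ H)
    (n : ℕ) (h : ℕ → ℕ) (h0 : h 0 = 0)
    (hmono : ∀ i < n, h i < h (i + 1))
    (hdesc : H = {m | ∃ i ≤ n, m = h i} ∪ {m | h n ≤ m}) :
    ∀ K a b c, a ∈ H → b ∈ H → c ∈ H → c < b → b ≤ a → a ≤ h n →
      a + b = h n + 1 + c → h n ≤ c + K →
      ∃ j, 1 ≤ j ∧ j ≤ n ∧ h j + h j = h (j - 1) + h n + 1 := by
  intro K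
  induction K with
  | zero => intro a b c _ _ _ hcb hba han _ hK; omega
  | succ K ih =>
    intro a b c haH hbH hcH hcb hba han hsum hK
    obtain ⟨j, hjn, hbj⟩ := idxH' H n h hdesc b hbH (le_trans hba han)
    have hj1 : 1 ≤ j := by
      rcases Nat.eq_zero_or_pos j with rfl | h'
      · rw [h0] at hbj; omega
      · exact h'
    have hpH : h (j - 1) ∈ H := memH' H n h hdesc _ (by omega)
    have hpb : h (j - 1) < b := by
      rw [hbj]; exact mono_lt' n h hmono (j - 1) j (by omega) hjn
    have hcp : c ≤ h (j - 1) := by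
      obtain ⟨i, hin, rfl⟩ := idxH' H n h hdesc c hcH (by omega)
      have hij : i < j := by
        by_contra hc'
        push_neg at hc'
        have := mono_le' n h hmono j i hc' hin
        omega
      exact mono_le' n h hmono i (j - 1) (by omega) (by omega)
    rcases eq_or_lt_of_le hcp with hceq | hclt
    · rcases eq_or_lt_of_le hba with hab | hab
      · exact ⟨j, hj1, hjn, by omega⟩
      · set u := b + b - c with hu
        have huH : u ∈ H := harf b hbH b hbH c hcH (by omega) le_rfl
        have hun : u ≤ h n := by omega
        rcases le_total a u with hau | hua
        · exact ih u a b huH haH hbH (by omega) hau hun (by omega) (by omega)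
        · exact ih a u b haH huH hbH (by omega) hua han (by omega) (by omega)
    · set w := b + h (j - 1) - c with hw
      have hwH : w ∈ H := harf b hbH (h (j - 1)) hpH c hcH (le_of_lt hclt) (le_of_lt hpb)
      have hwn : w ≤ h n := by omega
      rcases le_total a w with haw | hwa
      · exact ih w a (h (j - 1)) hwH haH hpH (by omega) haw hwn (by omega) (by omega)
      · exact ih a w (h (j - 1)) haH hwH hpH (by omega) hwa han (by omega) (by omega)

/-- Let H ≠ ℕ be an Arf numerical semigroup with small elements 0 = h₀ < h₁ < ⋯ < hₙ,
hₙ = F(H) + 1, and xⱼ = hⱼ - h_{j-1}. Then F(H) + 2 is a minimal Arf generator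
(equivalently H \ {F(H) + 2} is Arf) iff xⱼ ≠ x_{j+1} + ⋯ + xₙ + 1 for all 1 ≤ j ≤ n. -/
theorem frobenius_add_two_minimal_arf_generator_iff (H : Set ℕ)
    (hH : IsArfSemigroup H) (hne : H ≠ Set.univ)
    (n : ℕ) (h : ℕ → ℕ) (h0 : h 0 = 0)
    (hmono : ∀ i < n, h i < h (i + 1))
    (hcond : h n = Frobenius H + 1)
    (hdesc : H = {m | ∃ i ≤ n, m = h i} ∪ {m | h n ≤ m})
    (x : ℕ → ℕ) (hx : ∀ j, 1 ≤ j → j ≤ n → x j = h j - h (j - 1)) :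
    IsArfSemigroup (H \ {Frobenius H + 2}) ↔
      ∀ j, 1 ≤ j → j ≤ n → x j ≠ (∑ k ∈ Finset.Icc (j + 1) n, x k) + 1 := by
  have hsum : ∀ j, 1 ≤ j → j ≤ n →
      (∑ k ∈ Finset.Icc (j + 1) n, x k) = h n - h j := by
    intro j hj1 hjn
    calc (∑ k ∈ Finset.Icc (j + 1) n, x k)
        = ∑ k ∈ Finset.Icc (j + 1) n, (h k - h (k - 1)) := by
          refine Finset.sum_congr rfl ?_
          intro k hk
          simp only [Finset.mem_Icc] at hk
          exact hx k (by omega) hk.2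
      _ = h n - h j := tele' n h hmono n le_rfl j hjn
  constructor
  · intro hS j hj1 hjn heq
    have hjle : h j ≤ h n := mono_le' n h hmono j n hjn le_rfl
    have hpj : h (j - 1) < h j := mono_lt' n h hmono (j - 1) j (by omega) hjn
    rw [hx j hj1 hjn, hsum j hj1 hjn] at heq
    have hjS : h j ∈ H \ {Frobenius H + 2} :=
      ⟨memH' H n h hdesc j hjn, by simp only [Set.mem_singleton_iff]; omega⟩
    have hpS : h (j - 1) ∈ H \ {Frobenius H + 2} :=
      ⟨memH' H n h hdesc (j - 1) (by omega), by simp only [Set.mem_singleton_iff]; omega⟩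
    have hmem := hS.2 (h j) hjS (h j) hjS (h (j - 1)) hpS (le_of_lt hpj) le_rfl
    exact hmem.2 (by simp only [Set.mem_singleton_iff]; omega)
  · intro hcondn
    have hnotj : ∀ j, 1 ≤ j → j ≤ n → h j + h j ≠ h (j - 1) + h n + 1 := by
      intro j hj1 hjn hcon
      have hjle : h j ≤ h n := mono_le' n h hmono j n hjn le_rfl
      have hpj : h (j - 1) < h j := mono_lt' n h hmono (j - 1) j (by omega) hjn
      apply hcondn j hj1 hjn
      rw [hx j hj1 hjn, hsum j hj1 hjn]
      omega
    have h0S : (0 : ℕ) ∈ H \ {Frobenius H + 2} := by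
      refine ⟨?_, by simp only [Set.mem_singleton_iff]; omega⟩
      have := memH' H n h hdesc 0 (Nat.zero_le n)
      rwa [h0] at this
    have main : ∀ a ∈ H \ {Frobenius H + 2}, ∀ b ∈ H \ {Frobenius H + 2},
        ∀ c ∈ H \ {Frobenius H + 2}, c ≤ b → b ≤ a →
        a + b - c ∈ H \ {Frobenius H + 2} := by
      intro a ha b hb c hc hcb hba
      refine ⟨hH.2 a ha.1 b hb.1 c hc.1 hcb hba, ?_⟩
      simp only [Set.mem_singleton_iff]
      intro hF2
      have hane : a ≠ Frobenius H + 2 := by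
        have := ha.2; simp only [Set.mem_singleton_iff] at this; exact this
      rcases eq_or_lt_of_le hcb with hceq | hclt
      · omega
      · have hsum' : a + b = h n + 1 + c := by omega
        have han : a ≤ h n := by omega
        obtain ⟨j, hj1, hjn, hkey⟩ := descent' H hH.2 n h h0 hmono hdesc
          (h n + 1) a b c ha.1 hb.1 hc.1 hclt hba han hsum' (by omega)
        exact hnotj j hj1 hjn hkey
    refine ⟨⟨h0S, ?_, ?_⟩, main⟩
    · intro a ha b hb
      rcases le_total b a with hba | hab
      · have := main a ha b hb 0 h0S (Nat.zero_le b) hba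
        rwa [Nat.sub_zero] at this
      · have := main b hb a ha 0 h0S (Nat.zero_le a) hab
        rw [Nat.sub_zero, Nat.add_comm b a] at this
        exact this
    · have hSc : (H \ {Frobenius H + 2})ᶜ = Hᶜ ∪ {Frobenius H + 2} := by
        ext m
        simp only [Set.mem_compl_iff, Set.mem_diff, Set.mem_union, Set.mem_singleton_iff]
        tauto
      rw [hSc]
      exact (hH.1.2.2).union (Set.finite_singleton _)
end

section
/- Let H ≠ ℕ be an Arf numerical semigroup, written as H = {h₀ = 0 < h₁ < ⋯ < h_n} ∪ {m ∈ ℕ : m ≥ h_n}, where h₀, …, h_n are exactly the elements of H not exceeding the conductor h_n = F(H) + 1, and set x_j = h_j − h_{j−1} for j = 1, …, n. Then the minimal Arf system of generators of H contains no element greater than F(H) — equivalently, neither H \ {h_n} nor H \ {h_n + 1} is an Arf numerical semigroup — if and only if there exist i, j ∈ {1, …, n} such that x_i = x_{i+1} + ⋯ + x_n and x_j = x_{j+1} + ⋯ + x_n + 1. -/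
/-- Extremal argument: from any triple a ≥ b ≥ c in an Arf semigroup with
a < t and a + b - c = t, produce a consecutive pair p > q with 2p - q = t. -/
lemma arf_key (H : Set ℕ)
    (hArf : ∀ a ∈ H, ∀ b ∈ H, ∀ c ∈ H, c ≤ b → b ≤ a → a + b - c ∈ H) (t : ℕ) :
    ∀ N a b c, a ∈ H → b ∈ H → c ∈ H → c ≤ b → b ≤ a → a < t → a + b - c = t →
      (t - a) * (t + 2) + (a - b) ≤ N →
      ∃ p q, p ∈ H ∧ q ∈ H ∧ q < p ∧ p < t ∧ p + p - q = t ∧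
        ∀ m ∈ H, q < m → p ≤ m := by
  intro N
  induction N with
  | zero =>
    intro a b c ha hb hc hcb hba hat hs hN
    exfalso
    have h1 : 1 * (t + 2) ≤ (t - a) * (t + 2) :=
      Nat.mul_le_mul_right _ (by omega)
    omega
  | succ N ih =>
    intro a b c ha hb hc hcb hba hat hs hN
    have hbc : c < b := by omega
    by_cases hab : b = a
    · subst hab
      have hS : b ∈ {m | m ∈ H ∧ c < m} := ⟨hb, hbc⟩
      set c2 := sInf {m | m ∈ H ∧ c < m} with hc2def
      have hc2 : c2 ∈ {m | m ∈ H ∧ c < m} := Nat.sInf_mem ⟨b, hS⟩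
      have hc2b : c2 ≤ b := Nat.sInf_le hS
      have hc2H : c2 ∈ H := hc2.1
      have hcc2 : c < c2 := hc2.2
      by_cases hca : c2 = b
      · refine ⟨b, c, hb, hc, hbc, hat, by omega, fun m hm hcm => ?_⟩
        have := Nat.sInf_le (show m ∈ {m | m ∈ H ∧ c < m} from ⟨hm, hcm⟩)
        omega
      · have hc2b' : c2 < b := lt_of_le_of_ne hc2b hca
        have he : b + c2 - c ∈ H :=
          hArf b hb c2 hc2.1 c hc (le_of_lt hc2.2) (le_of_lt hc2b')
        refine ih (b + c2 - c) b c2 he hb hc2.1 hc2b (by omega) (by omega)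
          (by omega) ?_
        have h1 : (t - (b + c2 - c) + 1) * (t + 2) ≤ (t - b) * (t + 2) :=
          Nat.mul_le_mul_right _ (by omega)
        have h2 : (t - (b + c2 - c) + 1) * (t + 2)
            = (t - (b + c2 - c)) * (t + 2) + (t + 2) := by ring
        omega
    · have hba' : b < a := lt_of_le_of_ne hba hab
      have hd : b + b - c ∈ H := hArf b hb b hb c hc hcb le_rfl
      by_cases hda : b + b - c ≤ a
      · refine ih a (b + b - c) b ha hd hb (by omega) hda hat (by omega) (by omega)
      · refine ih (b + b - c) a b hd ha hb hba (by omega) (by omega) (by omega) ?_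
        have h1 : (t - (b + b - c) + 1) * (t + 2) ≤ (t - a) * (t + 2) :=
          Nat.mul_le_mul_right _ (by omega)
        have h2 : (t - (b + b - c) + 1) * (t + 2)
            = (t - (b + b - c)) * (t + 2) + (t + 2) := by ring
        omega

/-- Removing t from an Arf semigroup fails to be Arf iff a triple hits t. -/
lemma remove_not_arf_iff (H : Set ℕ) (hH : IsArfSemigroup H) (t : ℕ) (ht : 1 ≤ t) :
    ¬ IsArfSemigroup (H \ {t}) ↔
      ∃ a b c, a ∈ H ∧ b ∈ H ∧ c ∈ H ∧ c ≤ b ∧ b ≤ a ∧ a < t ∧ a + b - c = t := by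
  obtain ⟨⟨h0, hadd, hfin⟩, harf⟩ := hH
  constructor
  · intro hnot
    by_contra hno
    push_neg at hno
    apply hnot
    refine ⟨⟨⟨h0, by simp only [Set.mem_singleton_iff]; omega⟩, ?_, ?_⟩, ?_⟩
    · rintro a ⟨ha, ha'⟩ b ⟨hb, hb'⟩
      refine ⟨hadd a ha b hb, ?_⟩
      intro hab
      simp only [Set.mem_singleton_iff] at hab ha' hb'
      rcases le_total b a with hle | hle
      · exact hno a b 0 ha hb h0 (by omega) hle (by omega) (by omega)
      · exact hno b a 0 hb ha h0 (by omega) hle (by omega) (by omega)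
    · exact (hfin.union (Set.finite_singleton t)).subset (by
        intro m hm
        simp only [Set.mem_compl_iff, Set.mem_diff, Set.mem_singleton_iff,
          not_and, not_not] at hm
        by_cases hmH : m ∈ H
        · exact Or.inr (hm hmH)
        · exact Or.inl hmH)
    · rintro a ⟨ha, ha'⟩ b ⟨hb, hb'⟩ c ⟨hc, hc'⟩ hcb hba
      refine ⟨harf a ha b hb c hc hcb hba, ?_⟩
      intro habc
      simp only [Set.mem_singleton_iff] at habc ha'
      exact hno a b c ha hb hc hcb hba (by omega) habc
  · rintro ⟨a, b, c, ha, hb, hc, hcb, hba, hat, hs⟩ ⟨_, harf'⟩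
    have := harf' a ⟨ha, by simp; omega⟩ b ⟨hb, by simp; omega⟩
      c ⟨hc, by simp; omega⟩ hcb hba
    rw [hs] at this
    exact this.2 rfl


/-- Let H ≠ ℕ be an Arf numerical semigroup with small elements 0 = h₀ < h₁ < ⋯ < hₙ,
hₙ = F(H) + 1, and xⱼ = hⱼ - h_{j-1}. The minimal Arf system of generators of H has
no element greater than F(H) (equivalently, neither H \ {hₙ} nor H \ {hₙ + 1} is an
Arf numerical semigroup) iff there exist i, j ∈ {1,…,n} with
x_i = x_{i+1} + ⋯ + xₙ and x_j = x_{j+1} + ⋯ + xₙ + 1. -/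
theorem leaf_iff (H : Set ℕ) (hH : IsArfSemigroup H) (hne : H ≠ Set.univ)
    (n : ℕ) (h : ℕ → ℕ) (h0 : h 0 = 0)
    (hmono : ∀ i < n, h i < h (i + 1))
    (hcond : h n = Frobenius H + 1)
    (hdesc : H = {m | ∃ i ≤ n, m = h i} ∪ {m | h n ≤ m})
    (x : ℕ → ℕ) (hx : ∀ j, 1 ≤ j → j ≤ n → x j = h j - h (j - 1)) :
    (¬ IsArfSemigroup (H \ {h n}) ∧ ¬ IsArfSemigroup (H \ {h n + 1})) ↔
      (∃ i, 1 ≤ i ∧ i ≤ n ∧ x i = ∑ k ∈ Finset.Icc (i + 1) n, x k) ∧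
      (∃ j, 1 ≤ j ∧ j ≤ n ∧ x j = (∑ k ∈ Finset.Icc (j + 1) n, x k) + 1) := by
  have hArf := hH.2
  have hn1 : 1 ≤ h n := by rw [hcond]; omega
  have hn0 : 1 ≤ n := by
    by_contra hc
    have : n = 0 := by omega
    rw [this, h0] at hn1; omega
  -- monotonicity
  have hlt : ∀ i j, i < j → j ≤ n → h i < h j := by
    intro i j hij hjn
    induction j with
    | zero => omega
    | succ j ihj =>
      rcases Nat.lt_or_ge i j with h1 | h1
      · exact lt_trans (ihj h1 (by omega)) (hmono j (by omega))
      · have : i = j := by omega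
        subst this; exact hmono i (by omega)
  have hle : ∀ i j, i ≤ j → j ≤ n → h i ≤ h j := by
    intro i j hij hjn
    rcases eq_or_lt_of_le hij with rfl | hlt'
    · exact le_rfl
    · exact le_of_lt (hlt i j hlt' hjn)
  have hmem : ∀ i, i ≤ n → h i ∈ H := by
    intro i hi; rw [hdesc]; exact Or.inl ⟨i, hi, rfl⟩
  have hclass : ∀ m, m ∈ H → m ≤ h n → ∃ i, i ≤ n ∧ m = h i := by
    intro m hm hmn
    rw [hdesc] at hm
    rcases hm with ⟨i, hi, hmi⟩ | hm
    · exact ⟨i, hi, hmi⟩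
    · exact ⟨n, le_rfl, by simp only [Set.mem_setOf_eq] at hm; omega⟩
  -- triple criterion in index form
  have main : ∀ t, 1 ≤ t → t ≤ h n + 1 →
      ((∃ a b c, a ∈ H ∧ b ∈ H ∧ c ∈ H ∧ c ≤ b ∧ b ≤ a ∧ a < t ∧ a + b - c = t) ↔
        ∃ i, 1 ≤ i ∧ i ≤ n ∧ h i + h i = h (i - 1) + t) := by
    intro t ht1 htn
    constructor
    · rintro ⟨a, b, c, ha, hb, hc, hcb, hba, hat, hs⟩
      obtain ⟨p, q, hp, hq, hqp, hpt, hpq, hmin⟩ :=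
        arf_key H hArf t ((t - a) * (t + 2) + (a - b)) a b c ha hb hc hcb hba hat hs le_rfl
      obtain ⟨i, hi, hpi⟩ := hclass p hp (by omega)
      have hi1 : 1 ≤ i := by
        rcases Nat.eq_zero_or_pos i with rfl | _
        · exfalso; rw [h0] at hpi; omega
        · assumption
      have hqhi : q = h (i - 1) := by
        obtain ⟨k, hk, hqk⟩ := hclass q hq (by omega)
        have hki : k < i := by
          by_contra hki
          have := hle i k (by omega) hk
          omega
        have h1 : q ≤ h (i - 1) := by
          rw [hqk]; exact hle k (i - 1) (by omega) (by omega)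
        have h2 : h (i - 1) < p := by rw [hpi]; exact hlt (i - 1) i (by omega) hi
        have h3 : ¬ (q < h (i - 1)) := by
          intro hlt'
          have := hmin (h (i - 1)) (hmem (i - 1) (by omega)) hlt'
          omega
        omega
      exact ⟨i, hi1, hi, by rw [← hpi, ← hqhi]; omega⟩
    · rintro ⟨i, hi1, hin, heq⟩
      have h1 : h (i - 1) < h i := hlt (i - 1) i (by omega) hin
      exact ⟨h i, h i, h (i - 1), hmem i hin, hmem i hin, hmem (i - 1) (by omega),
        le_of_lt h1, le_rfl, by omega, by omega⟩
  -- telescoping sums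
  have tele : ∀ i, i ≤ n → ∑ k ∈ Finset.Icc (i + 1) n, x k = h n - h i := by
    have key : ∀ m, m ≤ n → ∀ i, i ≤ m →
        ∑ k ∈ Finset.Icc (i + 1) m, x k = h m - h i := by
      intro m
      induction m with
      | zero => intro _ i hi; interval_cases i; simp
      | succ m ihm =>
        intro hm i hi
        rcases Nat.lt_or_ge i (m + 1) with hlt' | hge
        · have hi' : i ≤ m := by omega
          rw [Finset.sum_Icc_succ_top (by omega), ihm (by omega) i hi']
          have hxm : x (m + 1) = h (m + 1) - h m := by
            simpa using hx (m + 1) (by omega) hm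
          have hh1 := hle i m hi' (by omega)
          have hh2 := hmono m (by omega)
          omega
        · have : i = m + 1 := by omega
          subst this; simp
    intro i hi; exact key n le_rfl i hi
  have iff1 : ¬ IsArfSemigroup (H \ {h n}) ↔
      ∃ i, 1 ≤ i ∧ i ≤ n ∧ x i = ∑ k ∈ Finset.Icc (i + 1) n, x k := by
    rw [remove_not_arf_iff H hH (h n) hn1, main (h n) hn1 (by omega)]
    constructor
    · rintro ⟨i, hi1, hin, heq⟩
      refine ⟨i, hi1, hin, ?_⟩
      rw [hx i hi1 hin, tele i hin]
      have h1 : h (i - 1) < h i := hlt (i - 1) i (by omega) hin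
      have h2 : h i ≤ h n := hle i n hin le_rfl
      omega
    · rintro ⟨i, hi1, hin, heq⟩
      refine ⟨i, hi1, hin, ?_⟩
      rw [hx i hi1 hin, tele i hin] at heq
      have h1 : h (i - 1) < h i := hlt (i - 1) i (by omega) hin
      have h2 : h i ≤ h n := hle i n hin le_rfl
      omega
  have iff2 : ¬ IsArfSemigroup (H \ {h n + 1}) ↔
      ∃ j, 1 ≤ j ∧ j ≤ n ∧ x j = (∑ k ∈ Finset.Icc (j + 1) n, x k) + 1 := by
    rw [remove_not_arf_iff H hH (h n + 1) (by omega), main (h n + 1) (by omega) le_rfl]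
    constructor
    · rintro ⟨j, hj1, hjn, heq⟩
      refine ⟨j, hj1, hjn, ?_⟩
      rw [hx j hj1 hjn, tele j hjn]
      have h1 : h (j - 1) < h j := hlt (j - 1) j (by omega) hjn
      have h2 : h j ≤ h n := hle j n hjn le_rfl
      omega
    · rintro ⟨j, hj1, hjn, heq⟩
      refine ⟨j, hj1, hjn, ?_⟩
      rw [hx j hj1 hjn, tele j hjn] at heq
      have h1 : h (j - 1) < h j := hlt (j - 1) j (by omega) hjn
      have h2 : h j ≤ h n := hle j n hjn le_rfl
      omega
  rw [iff1, iff2]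
end
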